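/- There is an absolute constant C such that the following holds: for every integer d ≥ 2, every real X ≥ 2, and every b : ℕ → ℂ with |b(n)| ≤ 1 for all n, one has ∫_{−∞}^{∞} Σ*_{χ mod d} |Σ_{1 ≤ n ≤ X} b(n) χ(n) n^{−1/2−it}|⁴ dt/(t²+1) ≤ C · (d + X²) · (log X)⁴. -/

import Mathlib

/-!
Bound the primitive characters by all characters and fix `t`. With `Re s = -1/2`, the square of
`D(χ) = ∑_{n ≤ N} b(n) n^s χ(n)` is a Dirichlet polynomial `∑_{m ≤ N²} a(m) χ(m)`, so orthogonality
of characters (the trivial large sieve) gives `∑_χ |D(χ)|⁴ ≤ (d + N²) ∑_m |a(m)|²`. By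
Cauchy–Schwarz `|a(m)|² ≤ τ_N(m)² / m`, where `τ_N(m)` counts the factorizations `m = n n'` with
`n, n' ≤ N`. The solutions of `n₁ n₂ = n₃ n₄` are parametrized by `(g x, y z, g y, x z)`, so
`∑_m τ_N(m)² / m ≤ (∑_{n ≤ N} 1/n)⁴`. Finally `∫ dt / (t² + 1) = π`.
-/

open MeasureTheory Real Complex

/-- The sum of `f` over all primitive Dirichlet characters modulo `d`
(a finite sum, since there are finitely many Dirichlet characters modulo `d`). -/
noncomputable def sumPrimitive (d : ℕ) (f : DirichletCharacter ℂ d → ℝ) : ℝ :=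
  ∑ᶠ χ ∈ {χ : DirichletCharacter ℂ d | χ.IsPrimitive}, f χ

open Finset ComplexConjugate

lemma exists_eq_mul_of_mul_eq_mul {α : Type*} [CommMonoidWithZero α] [IsCancelMulZero α]
    [DecompositionMonoid α] {a b c e : α} (ha : a ≠ 0) (h : a * b = c * e) :
    ∃ g x y z, a = g * x ∧ b = y * z ∧ c = g * y ∧ e = x * z := by
  obtain ⟨g, x, ⟨y, rfl⟩, ⟨z, rfl⟩, rfl⟩ := exists_dvd_and_dvd_of_dvd_mul (Dvd.intro b h)
  refine ⟨g, x, y, z, rfl, mul_left_cancel₀ ha ?_, rfl, rfl⟩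
  rw [h, mul_mul_mul_comm]

lemma Nat.left_mem_Icc_one_of_mul_mem {g x N : ℕ} (h : g * x ∈ Icc 1 N) : g ∈ Icc 1 N := by
  rw [mem_Icc] at h ⊢
  have hx : 0 < x := Nat.pos_of_mul_pos_left h.1
  exact ⟨Nat.pos_of_mul_pos_right h.1, (Nat.le_mul_of_pos_right g hx).trans h.2⟩

lemma Nat.right_mem_Icc_one_of_mul_mem {g x N : ℕ} (h : g * x ∈ Icc 1 N) : x ∈ Icc 1 N :=
  Nat.left_mem_Icc_one_of_mul_mem (mul_comm g x ▸ h)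

lemma Nat.totient_mul_div_add_one_le (d M : ℕ) : d.totient * (M / d + 1) ≤ d + M :=
  calc d.totient * (M / d + 1) ≤ d * (M / d) + d := by
        rw [mul_add_one]; gcongr <;> exact Nat.totient_le d
    _ ≤ d + M := by linarith [Nat.mul_div_le M d]

lemma ZMod.card_filter_Icc_natCast_eq_le {d : ℕ} (M : ℕ) (r : ZMod d) :
    #{m ∈ Icc 1 M | ((m : ℕ) : ZMod d) = r} ≤ M / d + 1 := by
  calc #{m ∈ Icc 1 M | ((m : ℕ) : ZMod d) = r} ≤ #(range (M / d + 1)) := by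
        refine card_le_card_of_injOn (· / d) (fun m hm => ?_) fun m hm m' hm' hmm' => ?_
        · simp only [coe_filter, mem_Icc, Set.mem_ofPred_eq] at hm
          simpa [Nat.lt_succ_iff] using Nat.div_le_div_right hm.1.2
        · simp only [coe_filter, Set.mem_ofPred_eq] at hm hm'
          have hmod : m % d = m' % d := by
            rw [← ZMod.val_natCast, ← ZMod.val_natCast, hm.2, hm'.2]
          rw [← Nat.div_add_mod m d, ← Nat.div_add_mod m' d, hmod, show m / d = m' / d from hmm']
    _ = M / d + 1 := card_range _

def mulFiber (N m : ℕ) : Finset (ℕ × ℕ) := {p ∈ Icc 1 N ×ˢ Icc 1 N | p.1 * p.2 = m}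

lemma sq_sum_Icc_mul {R : Type*} [CommSemiring R] (N : ℕ) (f w : ℕ → R)
    (hw : ∀ m n, w (m * n) = w m * w n) :
    (∑ n ∈ Icc 1 N, f n * w n) ^ 2 =
      ∑ m ∈ Icc 1 (N * N), (∑ p ∈ mulFiber N m, f p.1 * f p.2) * w m := by
  have hmaps : ∀ p ∈ Icc 1 N ×ˢ Icc 1 N, p.1 * p.2 ∈ Icc 1 (N * N) := by
    simp only [mem_product, mem_Icc]
    exact fun p hp => ⟨Nat.mul_pos hp.1.1 hp.2.1, Nat.mul_le_mul hp.1.2 hp.2.2⟩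
  rw [sq, sum_mul_sum, ← sum_product', ← sum_fiberwise_of_maps_to hmaps]
  refine sum_congr rfl fun m _ => ?_
  rw [mulFiber, sum_mul]
  refine sum_congr rfl fun p hp => ?_
  rw [← (mem_filter.mp hp).2, hw]
  ring

/-- Via `(g, x, y, z) ↦ ((g * x, y * z), (g * y, x * z))` these quadruples cover
`mulFiber N m ×ˢ mulFiber N m`. -/
def quadFiber (N m : ℕ) : Finset (ℕ × ℕ × ℕ × ℕ) :=
  {v ∈ Icc 1 N ×ˢ Icc 1 N ×ˢ Icc 1 N ×ˢ Icc 1 N | v.1 * v.2.1 * (v.2.2.1 * v.2.2.2) = m}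

lemma card_mulFiber_sq_le (N m : ℕ) : #(mulFiber N m) ^ 2 ≤ #(quadFiber N m) := by
  rw [sq, ← card_product]
  refine card_le_card_of_surjOn (fun v => ((v.1 * v.2.1, v.2.2.1 * v.2.2.2),
    (v.1 * v.2.2.1, v.2.1 * v.2.2.2))) ?_
  rintro ⟨⟨a, b⟩, ⟨c, e⟩⟩ hpq
  simp only [mulFiber, coe_product, coe_filter, Set.mem_prod, Set.mem_ofPred_eq, mem_product] at hpq
  obtain ⟨⟨⟨ha, hb⟩, hab⟩, ⟨⟨hc, he⟩, hce⟩⟩ := hpq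
  have ha0 : a ≠ 0 := Nat.one_le_iff_ne_zero.mp (mem_Icc.mp ha).1
  obtain ⟨g, x, y, z, rfl, rfl, rfl, rfl⟩ := exists_eq_mul_of_mul_eq_mul ha0 (hab.trans hce.symm)
  refine ⟨(g, x, y, z), ?_, rfl⟩
  simp only [quadFiber, coe_filter, mem_product, Set.mem_ofPred_eq]
  exact ⟨⟨Nat.left_mem_Icc_one_of_mul_mem ha, Nat.right_mem_Icc_one_of_mul_mem ha,
    Nat.left_mem_Icc_one_of_mul_mem hb, Nat.right_mem_Icc_one_of_mul_mem hb⟩, hab⟩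

lemma sum_card_mulFiber_sq_div_le (N : ℕ) :
    ∑ m ∈ Icc 1 (N * N), (#(mulFiber N m) ^ 2 : ℝ) / m ≤ (∑ n ∈ Icc 1 N, (n : ℝ)⁻¹) ^ 4 := by
  set Q := Icc 1 N ×ˢ Icc 1 N ×ˢ Icc 1 N ×ˢ Icc 1 N
  set prod : ℕ × ℕ × ℕ × ℕ → ℕ := fun v => v.1 * v.2.1 * (v.2.2.1 * v.2.2.2)
  calc ∑ m ∈ Icc 1 (N * N), (#(mulFiber N m) ^ 2 : ℝ) / m
      ≤ ∑ m ∈ Icc 1 (N * N), ∑ v ∈ Q with prod v = m, ((prod v : ℕ) : ℝ)⁻¹ := by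
        refine sum_le_sum fun m _ => ?_
        rw [sum_congr rfl fun v hv => by rw [(mem_filter.mp hv).2], sum_const, nsmul_eq_mul,
          ← div_eq_mul_inv]
        gcongr
        exact_mod_cast card_mulFiber_sq_le N m
    _ ≤ ∑ v ∈ Q, ((prod v : ℕ) : ℝ)⁻¹ :=
        sum_fiberwise_le_sum_of_sum_fiber_nonneg fun _ _ => sum_nonneg fun _ _ => by positivity
    _ = (∑ n ∈ Icc 1 N, (n : ℝ)⁻¹) ^ 4 := by
        simp only [Q, prod, sum_product, Nat.cast_mul, mul_inv, ← mul_sum, ← sum_mul]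
        ring

lemma sum_norm_sq_sum_mulFiber_le (N : ℕ) (f : ℕ → ℂ)
    (hf : ∀ n ∈ Icc 1 N, ‖f n‖ ^ 2 ≤ (n : ℝ)⁻¹) :
    ∑ m ∈ Icc 1 (N * N), ‖∑ p ∈ mulFiber N m, f p.1 * f p.2‖ ^ 2 ≤
      (∑ n ∈ Icc 1 N, (n : ℝ)⁻¹) ^ 4 := by
  refine (sum_le_sum fun m _ => ?_).trans (sum_card_mulFiber_sq_div_le N)
  have hterm : ∀ p ∈ mulFiber N m, ‖f p.1 * f p.2‖ ^ 2 ≤ (m : ℝ)⁻¹ := by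
    intro p hp
    simp only [mulFiber, mem_filter, mem_product] at hp
    rw [← hp.2, norm_mul, mul_pow, Nat.cast_mul, mul_inv]
    exact mul_le_mul (hf _ hp.1.1) (hf _ hp.1.2) (by positivity) (by positivity)
  calc ‖∑ p ∈ mulFiber N m, f p.1 * f p.2‖ ^ 2
      ≤ (∑ p ∈ mulFiber N m, ‖f p.1 * f p.2‖) ^ 2 := by gcongr; exact norm_sum_le _ _
    _ ≤ #(mulFiber N m) * ∑ p ∈ mulFiber N m, ‖f p.1 * f p.2‖ ^ 2 := sq_sum_le_card_mul_sum_sq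
    _ ≤ #(mulFiber N m) * (#(mulFiber N m) * (m : ℝ)⁻¹) := by
        gcongr
        simpa using sum_le_sum hterm
    _ = (#(mulFiber N m) ^ 2 : ℝ) / m := by ring

namespace DirichletCharacter

lemma apply_inv_of_isUnit {d : ℕ} (χ : DirichletCharacter ℂ d) {a : ZMod d} (ha : IsUnit a) :
    χ a⁻¹ = conj (χ a) := by
  rw [← Complex.star_def, MulChar.star_apply', MulChar.inv_apply_eq_inv']
  refine eq_inv_of_mul_eq_one_right ?_
  rw [← map_mul, ZMod.mul_inv_of_unit a ha, map_one]

variable {d : ℕ} [NeZero d]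

lemma sum_apply_mul_conj_apply (a b : ZMod d) :
    ∑ χ : DirichletCharacter ℂ d, χ a * conj (χ b) =
      if a = b ∧ IsUnit b then (d.totient : ℂ) else 0 := by
  by_cases hb : IsUnit b
  · calc ∑ χ : DirichletCharacter ℂ d, χ a * conj (χ b)
        = ∑ χ : DirichletCharacter ℂ d, χ b⁻¹ * χ a :=
          sum_congr rfl fun χ _ => by rw [apply_inv_of_isUnit χ hb, mul_comm]
      _ = _ := by simp [sum_char_inv_mul_char_eq ℂ hb a, eq_comm, hb]
  · simp [MulChar.map_nonunit _ hb, hb]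

lemma sum_norm_sq_sum_mul_apply (A : ZMod d → ℂ) :
    ∑ χ : DirichletCharacter ℂ d, ‖∑ r, A r * χ r‖ ^ 2 =
      d.totient * ∑ r with IsUnit r, ‖A r‖ ^ 2 := by
  apply Complex.ofReal_injective
  push_cast
  calc ∑ χ : DirichletCharacter ℂ d, ((‖∑ r, A r * χ r‖ : ℂ)) ^ 2
      = ∑ r, ∑ s, A r * conj (A s) * ∑ χ : DirichletCharacter ℂ d, χ r * conj (χ s) := by
        simp_rw [← Complex.mul_conj', map_sum, map_mul, sum_mul_sum, mul_sum]
        rw [sum_comm]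
        refine sum_congr rfl fun r _ => sum_comm.trans (sum_congr rfl fun s _ => ?_)
        exact sum_congr rfl fun χ _ => by ring
    _ = d.totient * ∑ r with IsUnit r, ((‖A r‖ : ℂ)) ^ 2 := by
        simp_rw [sum_apply_mul_conj_apply, ← Complex.mul_conj', sum_filter, mul_sum]
        refine sum_congr rfl fun r _ => ?_
        simp [ite_and, mul_comm]

/-- Grouping `m` by its residue class `r`, Cauchy–Schwarz costs the size `≤ M / d + 1` of the
class in `[1, M]`, and `φ(d) (M / d + 1) ≤ d + M`. -/
lemma sum_norm_sq_sum_Icc_mul_apply_le (M : ℕ) (a : ℕ → ℂ) :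
    ∑ χ : DirichletCharacter ℂ d, ‖∑ m ∈ Icc 1 M, a m * χ m‖ ^ 2 ≤
      (d + M) * ∑ m ∈ Icc 1 M, ‖a m‖ ^ 2 := by
  set A : ZMod d → ℂ := fun r => ∑ m ∈ Icc 1 M with ((m : ℕ) : ZMod d) = r, a m
  have hA (χ : DirichletCharacter ℂ d) : ∑ m ∈ Icc 1 M, a m * χ m = ∑ r, A r * χ r := by
    rw [← sum_fiberwise (Icc 1 M) (fun m : ℕ => (m : ZMod d))]
    refine sum_congr rfl fun r _ => ?_
    rw [sum_mul]
    exact sum_congr rfl fun m hm => by rw [(mem_filter.mp hm).2]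
  have hCS (r : ZMod d) :
      ‖A r‖ ^ 2 ≤ (M / d + 1 : ℕ) * ∑ m ∈ Icc 1 M with ((m : ℕ) : ZMod d) = r, ‖a m‖ ^ 2 :=
    calc ‖A r‖ ^ 2 ≤ (∑ m ∈ Icc 1 M with ((m : ℕ) : ZMod d) = r, ‖a m‖) ^ 2 := by
          gcongr; exact norm_sum_le _ _
      _ ≤ #{m ∈ Icc 1 M | ((m : ℕ) : ZMod d) = r} *
            ∑ m ∈ Icc 1 M with ((m : ℕ) : ZMod d) = r, ‖a m‖ ^ 2 :=
          sq_sum_le_card_mul_sum_sq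
      _ ≤ _ := by gcongr; exact_mod_cast ZMod.card_filter_Icc_natCast_eq_le M r
  calc ∑ χ : DirichletCharacter ℂ d, ‖∑ m ∈ Icc 1 M, a m * χ m‖ ^ 2
      = d.totient * ∑ r with IsUnit r, ‖A r‖ ^ 2 := by
        simp_rw [hA, sum_norm_sq_sum_mul_apply]
    _ ≤ d.totient * ∑ r, (M / d + 1 : ℕ) *
          ∑ m ∈ Icc 1 M with ((m : ℕ) : ZMod d) = r, ‖a m‖ ^ 2 := by
        gcongr
        exact (sum_le_sum_of_subset_of_nonneg (filter_subset _ _) fun r _ _ => by positivity).trans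
          (sum_le_sum fun r _ => hCS r)
    _ = (d.totient * (M / d + 1) : ℕ) * ∑ m ∈ Icc 1 M, ‖a m‖ ^ 2 := by
        rw [← mul_sum, sum_fiberwise]; push_cast; ring
    _ ≤ (d + M) * ∑ m ∈ Icc 1 M, ‖a m‖ ^ 2 := by
        gcongr; exact_mod_cast Nat.totient_mul_div_add_one_le d M

lemma sum_norm_pow_four_sum_Icc_mul_apply_le (N : ℕ) (f : ℕ → ℂ)
    (hf : ∀ n ∈ Icc 1 N, ‖f n‖ ^ 2 ≤ (n : ℝ)⁻¹) :
    ∑ χ : DirichletCharacter ℂ d, ‖∑ n ∈ Icc 1 N, f n * χ n‖ ^ 4 ≤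
      (d + (N * N : ℕ)) * (∑ n ∈ Icc 1 N, (n : ℝ)⁻¹) ^ 4 := by
  have hsq (χ : DirichletCharacter ℂ d) : ‖∑ n ∈ Icc 1 N, f n * χ n‖ ^ 4 =
      ‖∑ m ∈ Icc 1 (N * N), (∑ p ∈ mulFiber N m, f p.1 * f p.2) * χ m‖ ^ 2 := by
    rw [← sq_sum_Icc_mul N f (fun n => χ n) fun m n => by rw [Nat.cast_mul, map_mul], norm_pow,
      ← pow_mul]
  simp_rw [hsq]
  refine (sum_norm_sq_sum_Icc_mul_apply_le _ _).trans ?_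
  gcongr
  exact sum_norm_sq_sum_mulFiber_le N f hf

end DirichletCharacter

open Classical in
lemma sumPrimitive_eq_sum_filter (d : ℕ) (f : DirichletCharacter ℂ d → ℝ) :
    sumPrimitive d f = ∑ χ with χ.IsPrimitive, f χ := by
  rw [sumPrimitive, finsum_mem_eq_toFinset_sum, Set.toFinset_ofPred]

lemma sumPrimitive_nonneg {d : ℕ} {f : DirichletCharacter ℂ d → ℝ} (hf : ∀ χ, 0 ≤ f χ) :
    0 ≤ sumPrimitive d f := by
  classical
  rw [sumPrimitive_eq_sum_filter]
  exact sum_nonneg fun χ _ => hf χ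

lemma sumPrimitive_le_sum {d : ℕ} {f : DirichletCharacter ℂ d → ℝ} (hf : ∀ χ, 0 ≤ f χ) :
    sumPrimitive d f ≤ ∑ χ, f χ := by
  classical
  rw [sumPrimitive_eq_sum_filter]
  exact sum_le_sum_of_subset_of_nonneg (filter_subset _ _) fun χ _ _ => hf χ

lemma sum_Icc_floor_inv_le_three_mul_log {X : ℝ} (hX : 2 ≤ X) :
    ∑ n ∈ Icc 1 ⌊X⌋₊, (n : ℝ)⁻¹ ≤ 3 * Real.log X := by
  have hlog_floor : Real.log ⌊X⌋₊ ≤ Real.log X :=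
    Real.log_le_log (by exact_mod_cast Nat.floor_pos.mpr (by linarith))
      (Nat.floor_le (by linarith))
  have hlog_two : Real.log 2 ≤ Real.log X := Real.log_le_log two_pos hX
  calc ∑ n ∈ Icc 1 ⌊X⌋₊, (n : ℝ)⁻¹ = harmonic ⌊X⌋₊ := by
        rw [harmonic_eq_sum_Icc]; push_cast; rfl
    _ ≤ 1 + Real.log ⌊X⌋₊ := harmonic_le_one_add_log _
    _ ≤ 3 * Real.log X := by linarith [log_two_gt_d9]

lemma norm_mul_natCast_cpow_sq_le {z s : ℂ} (hz : ‖z‖ ≤ 1) (hs : s.re = -(1 / 2)) {n : ℕ}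
    (hn : 0 < n) : ‖z * (n : ℂ) ^ s‖ ^ 2 ≤ (n : ℝ)⁻¹ := by
  have hpow : ((n : ℝ) ^ s.re) ^ 2 = (n : ℝ)⁻¹ := by
    rw [hs, ← rpow_natCast, ← rpow_mul (Nat.cast_nonneg n)]
    norm_num [rpow_neg_one]
  rw [norm_mul, mul_pow, norm_natCast_cpow_of_pos hn, hpow]
  exact mul_le_of_le_one_left (by positivity) (pow_le_one₀ (norm_nonneg z) hz)

lemma integral_div_sq_add_one_le {F : ℝ → ℝ} {B : ℝ} (hF : ∀ t, 0 ≤ F t) (hFB : ∀ t, F t ≤ B) :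
    ∫ t, F t / (t ^ 2 + 1) ≤ π * B := by
  calc ∫ t, F t / (t ^ 2 + 1) ≤ ∫ t, B * (1 + t ^ 2)⁻¹ := by
        refine integral_mono_of_nonneg (.of_forall fun t => by positivity [hF t])
          (integrable_inv_one_add_sq.const_mul B) (.of_forall fun t => ?_)
        dsimp only
        rw [add_comm 1, ← div_eq_mul_inv]
        exact div_le_div_of_nonneg_right (hFB t) (by positivity)
    _ = π * B := by rw [integral_const_mul, integral_univ_inv_one_add_sq, mul_comm]

/-- Fourth moment bound for Dirichlet polynomials with bounded coefficients:
`∫_ℝ Σ*_{χ mod d} |Σ_{n ≤ X} b(n) χ(n) n^{-1/2-it}|⁴ dt/(t²+1) ≤ C (d + X²) (log X)⁴`. -/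
theorem fourth_moment_bounded_coeffs :
    ∃ C : ℝ, ∀ d : ℕ, 2 ≤ d → ∀ X : ℝ, 2 ≤ X → ∀ b : ℕ → ℂ, (∀ n, ‖b n‖ ≤ 1) →
      (∫ t : ℝ, sumPrimitive d (fun χ =>
          ‖∑ n ∈ Finset.Icc 1 ⌊X⌋₊,
            b n * χ (n : ZMod d) * (n : ℂ) ^ (-(1 / 2 : ℂ) - Complex.I * t)‖ ^ 4) / (t ^ 2 + 1))
        ≤ C * (d + X ^ 2) * Real.log X ^ 4 := by
  refine ⟨4 * 3 ^ 4, fun d hd X hX b hb => ?_⟩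
  have : NeZero d := ⟨by omega⟩
  have hpointwise (t : ℝ) : sumPrimitive d (fun χ => ‖∑ n ∈ Icc 1 ⌊X⌋₊,
      b n * χ (n : ZMod d) * (n : ℂ) ^ (-(1 / 2 : ℂ) - Complex.I * t)‖ ^ 4) ≤
        (d + X ^ 2) * (3 * Real.log X) ^ 4 := by
    refine (sumPrimitive_le_sum fun χ => by positivity).trans ?_
    simp_rw [mul_right_comm (b _)]
    refine (DirichletCharacter.sum_norm_pow_four_sum_Icc_mul_apply_le _ _
      fun n hn => norm_mul_natCast_cpow_sq_le (hb n) (by simp) (mem_Icc.mp hn).1).trans ?_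
    gcongr
    · push_cast
      exact sq X ▸ mul_self_le_mul_self (Nat.cast_nonneg _) (Nat.floor_le (by linarith))
    · exact sum_Icc_floor_inv_le_three_mul_log hX
  refine (integral_div_sq_add_one_le (fun t => sumPrimitive_nonneg fun χ => by positivity)
    hpointwise).trans ?_
  have hlog : 0 ≤ Real.log X := Real.log_nonneg (by linarith)
  calc π * ((d + X ^ 2) * (3 * Real.log X) ^ 4) ≤ 4 * ((d + X ^ 2) * (3 * Real.log X) ^ 4) := by
        gcongr; exact pi_le_four
    _ = 4 * 3 ^ 4 * (d + X ^ 2) * Real.log X ^ 4 := by ring
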